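/- Fernique's functional is 1-Lipschitz with respect to the Wasserstein-1 distance in its first argument: for any finite set T, any probability measure μ on T, and any probability measures P, P' on R^T with finite first moment (with respect to the sup norm), |F(P,μ) − F(P',μ)| ≤ W_1(P,P'), where W_1 is the Wasserstein distance with respect to the sup norm ‖x‖ = max_{t∈T}|x_t|. -/

import Mathlib

/-!
Glue a coupling `(X, Y)` of `(P, P')` and a coupling `(Y, Z)` of `(P', μ)` into one triple
`(X, Y, Z)` by disintegrating the second coupling along `Y`. Pointwise `Y_Z ≤ X_Z + ‖X - Y‖`,
and `(X, Z)` couples `P` with `μ`, so `E[Y_Z] ≤ F(P, μ) + E‖X - Y‖`. Taking the supremum over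
`(Y, Z)` and the infimum over `(X, Y)`, and exchanging the roles of `P` and `P'`, gives the claim.
-/

open MeasureTheory ProbabilityTheory Real Filter

/-- Fernique's functional. -/
noncomputable def fernique {T : Type*} [Fintype T] [MeasurableSpace T]
    (P : Measure (T → ℝ)) (μ : Measure T) : ℝ :=
  sSup { r | ∃ ρ : Measure ((T → ℝ) × T), IsProbabilityMeasure ρ ∧
      ρ.map Prod.fst = P ∧ ρ.map Prod.snd = μ ∧ r = ∫ p, p.1 p.2 ∂ρ }

/-- Wasserstein-1 distance on `T → ℝ` with the sup norm. -/
noncomputable def wass1 {T : Type*} [Fintype T]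
    (P P' : Measure (T → ℝ)) : ℝ :=
  sInf { r | ∃ ρ : Measure ((T → ℝ) × (T → ℝ)), IsProbabilityMeasure ρ ∧
      ρ.map Prod.fst = P ∧ ρ.map Prod.snd = P' ∧ r = ∫ p, ‖p.1 - p.2‖ ∂ρ }

namespace MeasureTheory.Measure

variable {α β γ : Type*} [MeasurableSpace α] [MeasurableSpace β] [MeasurableSpace γ]

lemma map_prodMap_compProd_comap (μ : Measure α) [IsFiniteMeasure μ] (κ : Kernel β γ)
    [IsFiniteKernel κ] {f : α → β} (hf : Measurable f) :
    (μ ⊗ₘ κ.comap f hf).map (Prod.map f id) = μ.map f ⊗ₘ κ := by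
  refine ext_prod fun {s t} hs ht => ?_
  rw [map_apply (hf.prodMap measurable_id) (hs.prod ht), Set.preimage_prod_map_prod,
    Set.preimage_id, compProd_apply_prod (hf hs) ht, compProd_apply_prod hs ht,
    setLIntegral_map hs (κ.measurable_coe ht) hf]
  rfl

/-- Disintegrate `ρ₂` along its first coordinate and run the resulting kernel on the second
coordinate of `ρ₁`. -/
lemma exists_gluing [StandardBorelSpace γ] [Nonempty γ] (ρ₁ : Measure (α × β))
    [IsProbabilityMeasure ρ₁] (ρ₂ : Measure (β × γ)) [IsFiniteMeasure ρ₂]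
    (h : ρ₁.map Prod.snd = ρ₂.map Prod.fst) :
    ∃ ρ : Measure ((α × β) × γ), IsProbabilityMeasure ρ ∧ ρ.map Prod.fst = ρ₁ ∧
      ρ.map (Prod.map Prod.snd id) = ρ₂ := by
  refine ⟨ρ₁ ⊗ₘ ρ₂.condKernel.comap Prod.snd measurable_snd, inferInstance,
    fst_compProd _ _, ?_⟩
  rw [map_prodMap_compProd_comap, h]
  exact ρ₂.disintegrate ρ₂.condKernel

end MeasureTheory.Measure

section Fernique

variable {T : Type*} [Fintype T]

lemma apply_le_apply_add_norm_sub (x y : T → ℝ) (t : T) : y t ≤ x t + ‖x - y‖ := by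
  have h := norm_le_pi_norm (x - y) t
  rw [Pi.sub_apply, Real.norm_eq_abs] at h
  linarith [neg_abs_le (x t - y t)]

lemma integrable_norm_of_map_eq {Ω : Type*} [MeasurableSpace Ω] {ρ : Measure Ω}
    {P : Measure (T → ℝ)} {X : Ω → T → ℝ} (hX : Measurable X) (hXP : ρ.map X = P)
    (hP : Integrable (fun x => ‖x‖) P) : Integrable (fun ω => ‖X ω‖) ρ :=
  (hXP ▸ hP).comp_measurable hX

lemma integrable_norm_sub_of_map_eq {ρ : Measure ((T → ℝ) × (T → ℝ))} {P P' : Measure (T → ℝ)}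
    (hρP : ρ.map Prod.fst = P) (hρP' : ρ.map Prod.snd = P')
    (hP : Integrable (fun x => ‖x‖) P) (hP' : Integrable (fun x => ‖x‖) P') :
    Integrable (fun p => ‖p.1 - p.2‖) ρ :=
  ((integrable_norm_of_map_eq measurable_fst hρP hP).add
      (integrable_norm_of_map_eq measurable_snd hρP' hP')).mono
    (measurable_fst.sub measurable_snd).norm.aestronglyMeasurable
    (.of_forall fun p => by
      rw [norm_norm, Pi.add_apply, Real.norm_of_nonneg (by positivity)]
      exact norm_sub_le p.1 p.2)

variable [MeasurableSpace T] [MeasurableSingletonClass T]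

lemma measurable_eval_prod : Measurable fun p : (T → ℝ) × T => p.1 p.2 :=
  measurable_from_prod_countable_left measurable_pi_apply

lemma integrable_apply_of_map_eq {Ω : Type*} [MeasurableSpace Ω] {ρ : Measure Ω}
    {P : Measure (T → ℝ)} {X : Ω → T → ℝ} {Z : Ω → T} (hX : Measurable X) (hZ : Measurable Z)
    (hXP : ρ.map X = P) (hP : Integrable (fun x => ‖x‖) P) :
    Integrable (fun ω => X ω (Z ω)) ρ :=
  (integrable_norm_of_map_eq hX hXP hP).mono
    (measurable_eval_prod.comp (hX.prodMk hZ)).aestronglyMeasurable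
    (.of_forall fun ω => by simpa only [norm_norm] using norm_le_pi_norm (X ω) (Z ω))

lemma integral_apply_le_integral_norm {ρ : Measure ((T → ℝ) × T)} {P : Measure (T → ℝ)}
    (hρP : ρ.map Prod.fst = P) (hP : Integrable (fun x => ‖x‖) P) :
    ∫ p, p.1 p.2 ∂ρ ≤ ∫ x, ‖x‖ ∂P := by
  rw [← hρP, integral_map measurable_fst.aemeasurable (hρP ▸ hP.1)]
  exact integral_mono (integrable_apply_of_map_eq measurable_fst measurable_snd hρP hP)
    (integrable_norm_of_map_eq measurable_fst hρP hP)
    fun p => (le_abs_self _).trans (norm_le_pi_norm p.1 p.2)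

lemma integral_apply_le_fernique {P : Measure (T → ℝ)} {μ : Measure T}
    (hP : Integrable (fun x => ‖x‖) P) (ρ : Measure ((T → ℝ) × T)) [IsProbabilityMeasure ρ]
    (hρP : ρ.map Prod.fst = P) (hρμ : ρ.map Prod.snd = μ) :
    ∫ p, p.1 p.2 ∂ρ ≤ fernique P μ := by
  refine le_csSup ⟨∫ x, ‖x‖ ∂P, ?_⟩ ⟨ρ, inferInstance, hρP, hρμ, rfl⟩
  rintro r ⟨ρ', -, hρ'P, -, rfl⟩
  exact integral_apply_le_integral_norm hρ'P hP

variable [Nonempty T]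

lemma fernique_le_add_integral_norm_sub {P P' : Measure (T → ℝ)} {μ : Measure T}
    [IsProbabilityMeasure P'] [IsProbabilityMeasure μ]
    (hP : Integrable (fun x => ‖x‖) P) (hP' : Integrable (fun x => ‖x‖) P')
    (ρ₁ : Measure ((T → ℝ) × (T → ℝ))) [IsProbabilityMeasure ρ₁]
    (hρ₁P : ρ₁.map Prod.fst = P) (hρ₁P' : ρ₁.map Prod.snd = P') :
    fernique P' μ ≤ fernique P μ + ∫ p, ‖p.1 - p.2‖ ∂ρ₁ := by
  refine csSup_le ⟨_, P'.prod μ, inferInstance, by simp, by simp, rfl⟩ ?_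
  rintro r ⟨ρ₂, hρ₂, hρ₂P', hρ₂μ, rfl⟩
  obtain ⟨ρ, hρ, hρρ₁, hρρ₂⟩ := Measure.exists_gluing ρ₁ ρ₂ (hρ₁P'.trans hρ₂P'.symm)
  have hX : Measurable fun q : ((T → ℝ) × (T → ℝ)) × T => q.1.1 :=
    measurable_fst.comp measurable_fst
  have hY : Measurable fun q : ((T → ℝ) × (T → ℝ)) × T => q.1.2 :=
    measurable_snd.comp measurable_fst
  have hXZ : Measurable fun q : ((T → ℝ) × (T → ℝ)) × T => (q.1.1, q.2) :=
    hX.prodMk measurable_snd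
  have hρX : ρ.map (fun q => q.1.1) = P := by
    rw [← hρ₁P, ← hρρ₁, Measure.map_map measurable_fst measurable_fst]; rfl
  have hρY : ρ.map (fun q => q.1.2) = P' := by
    rw [← hρ₁P', ← hρρ₁, Measure.map_map measurable_snd measurable_fst]; rfl
  have hXZμ : (ρ.map fun q => (q.1.1, q.2)).map Prod.snd = μ := by
    rw [← hρ₂μ, ← hρρ₂, Measure.map_map measurable_snd hXZ,
      Measure.map_map measurable_snd (measurable_snd.prodMap measurable_id)]; rfl
  have hXZP : (ρ.map fun q => (q.1.1, q.2)).map Prod.fst = P := by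
    rw [Measure.map_map measurable_fst hXZ]; exact hρX
  have hcost : Integrable (fun q : ((T → ℝ) × (T → ℝ)) × T => ‖q.1.1 - q.1.2‖) ρ :=
    (hρρ₁ ▸ integrable_norm_sub_of_map_eq hρ₁P hρ₁P' hP hP').comp_measurable measurable_fst
  have hIX := integrable_apply_of_map_eq hX measurable_snd hρX hP
  calc ∫ p, p.1 p.2 ∂ρ₂ = ∫ q, q.1.2 q.2 ∂ρ := by
        rw [← hρρ₂, integral_map (measurable_snd.prodMap measurable_id).aemeasurable
          measurable_eval_prod.aestronglyMeasurable]; rfl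
    _ ≤ ∫ q, (q.1.1 q.2 + ‖q.1.1 - q.1.2‖) ∂ρ :=
        integral_mono (integrable_apply_of_map_eq hY measurable_snd hρY hP') (hIX.add hcost)
          fun q => apply_le_apply_add_norm_sub _ _ _
    _ = ∫ p, p.1 p.2 ∂(ρ.map fun q => (q.1.1, q.2)) + ∫ p, ‖p.1 - p.2‖ ∂ρ₁ := by
        rw [integral_add hIX hcost, integral_map hXZ.aemeasurable
          measurable_eval_prod.aestronglyMeasurable, ← hρρ₁, integral_map
          measurable_fst.aemeasurable (by fun_prop)]
    _ ≤ fernique P μ + ∫ p, ‖p.1 - p.2‖ ∂ρ₁ := by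
        gcongr
        have := Measure.isProbabilityMeasure_map (μ := ρ) hXZ.aemeasurable
        exact integral_apply_le_fernique hP _ hXZP hXZμ

end Fernique

/-- Fernique's functional is 1-Lipschitz in its first argument for `W₁`. -/
theorem stmt1 {T : Type*} [Fintype T] [Nonempty T] [MeasurableSpace T]
    [MeasurableSingletonClass T]
    (P P' : Measure (T → ℝ)) (μ : Measure T)
    [IsProbabilityMeasure P] [IsProbabilityMeasure P'] [IsProbabilityMeasure μ]
    (hP : Integrable (fun x => ‖x‖) P) (hP' : Integrable (fun x => ‖x‖) P') :
    |fernique P μ - fernique P' μ| ≤ wass1 P P' := by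
  refine le_csInf ⟨_, P.prod P', inferInstance, by simp, by simp, rfl⟩ ?_
  rintro r ⟨ρ, hρ, hρP, hρP', rfl⟩
  have := Measure.isProbabilityMeasure_map (μ := ρ) measurable_swap.aemeasurable
  have hswap : ∫ p, ‖p.1 - p.2‖ ∂(ρ.map Prod.swap) = ∫ p, ‖p.1 - p.2‖ ∂ρ := by
    rw [integral_map measurable_swap.aemeasurable (by fun_prop)]
    simp_rw [Prod.fst_swap, Prod.snd_swap, norm_sub_rev]
  rw [abs_sub_le_iff]
  constructor
  · have := fernique_le_add_integral_norm_sub (μ := μ) hP' hP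
      (ρ.map Prod.swap) (Measure.fst_map_swap.trans hρP') (Measure.snd_map_swap.trans hρP)
    linarith
  · linarith [fernique_le_add_integral_norm_sub (μ := μ) hP hP' ρ hρP hρP']
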